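/- Let U = exp(K∂₁) be the subgroup generated by a locally nilpotent derivation ∂₁ and V = ∂₂ a homogeneous derivation with e_i ∈ S_i for i = 1,2, c₂ = ⟨ρ₂,e₁⟩ ≥ 1 and δ = ⟨ρ₁,e₂⟩ + 1. Then the Newton polytope of the derivation ∂ = Ad_{exp(∂₁)}(∂₂) = exp(ad_{∂₁})(∂₂) is the line segment [e₂, e₂ + δ e₁] in M_ℚ. -/

import Mathlib

/-- The homogeneous derivation `∂_{ρ,e}` of the (semi)group algebra, defined on the
monomial basis by `∂_{ρ,e}(χ^m) = ⟨ρ,m⟩ χ^{m+e}`. -/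
noncomputable def homDer (K : Type*) [Field K] {M : Type*} [AddCommGroup M]
    (ρ : M →+ ℤ) (e : M) :
    AddMonoidAlgebra K M →ₗ[K] AddMonoidAlgebra K M :=
  (Finsupp.lsum K fun m =>
    LinearMap.toSpanSingleton K (AddMonoidAlgebra K M)
      ((ρ m : ℤ) • AddMonoidAlgebra.single (m + e) (1 : K))) ∘ₗ
    (AddMonoidAlgebra.coeffLinearEquiv K).toLinearMap

/-!
Write `U = ∂_{ρ₁,e₁}`. On monomials one computes
`[∂_{ρ,e}, ∂_{ρ',e'}] = ∂_{ρ(e')ρ' - ρ'(e)ρ, e + e'}`, so `ad_U^m(V)` is again homogeneous, of degree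
`e₂ + m e₁`. Solving the resulting recursion for its functional, using `ρ₁(e₁) = -1` and
`ρ₁(e₂) = d`, gives `ad_U^m(V) = m! ∂_{r_m, e₂ + m e₁}` with `r_m = C(d,m) ρ₂ - c C(d,m-1) ρ₁`,
`c = ρ₂(e₁)` and `C(d,-1) = 0`. Then `r_m(e₁) = c (C(d,m) + C(d,m-1)) > 0` for `0 ≤ m ≤ d+1`,
so none of these components vanishes.
-/

section HomDer

variable {K : Type*} [Field K] {M : Type*} [AddCommGroup M]

lemma homDer_single (ρ : M →+ ℤ) (e m : M) (k : K) :
    homDer K ρ e (AddMonoidAlgebra.single m k) = ρ m • AddMonoidAlgebra.single (m + e) k := by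
  rw [homDer, LinearMap.comp_apply]
  erw [Finsupp.lsum_single]
  rw [LinearMap.toSpanSingleton_apply, smul_comm, AddMonoidAlgebra.smul_single, smul_eq_mul,
    mul_one]

lemma homDer_zsmul (ρ : M →+ ℤ) (e : M) (z : ℤ) :
    homDer K (z • ρ) e = z • homDer K ρ e := by
  refine AddMonoidAlgebra.lhom_ext' fun m => LinearMap.ext fun k => ?_
  simp only [LinearMap.comp_apply, AddMonoidAlgebra.lsingle_apply, LinearMap.smul_apply,
    homDer_single, AddMonoidHom.smul_apply, smul_smul, smul_eq_mul]

lemma homDer_comp_sub_comp (ρ ρ' : M →+ ℤ) (e e' : M) :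
    homDer K ρ e ∘ₗ homDer K ρ' e' - homDer K ρ' e' ∘ₗ homDer K ρ e
      = homDer K (ρ e' • ρ' - ρ' e • ρ) (e' + e) := by
  refine AddMonoidAlgebra.lhom_ext' fun m => LinearMap.ext fun k => ?_
  simp only [LinearMap.comp_apply, AddMonoidAlgebra.lsingle_apply, LinearMap.sub_apply,
    homDer_single, map_zsmul, smul_smul, add_right_comm m e e', ← sub_smul, ← add_assoc]
  congr 1
  simp only [AddMonoidHom.sub_apply, AddMonoidHom.smul_apply, map_add, smul_eq_mul]
  ring

end HomDer

lemma Nat.sub_mul_choose_eq_succ_mul_choose_succ (d j : ℕ) :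
    ((d : ℤ) - j) * d.choose j = (j + 1) * d.choose (j + 1) := by
  rcases le_or_gt j d with h | h
  · have h2 := Nat.choose_succ_right_eq d j
    zify [h] at h2
    linarith
  · simp [Nat.choose_eq_zero_of_lt h, Nat.choose_eq_zero_of_lt (Nat.lt_succ_of_lt h)]

def shiftedChooseMul (c : ℤ) (d : ℕ) : ℕ → ℤ
  | 0 => 0
  | m + 1 => c * d.choose m

lemma shiftedChooseMul_succ_recurrence (c : ℤ) (d m : ℕ) :
    ((d : ℤ) - m) * shiftedChooseMul c d m + d.choose m * c + shiftedChooseMul c d m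
      = (m + 1) * shiftedChooseMul c d (m + 1) := by
  cases m with
  | zero => simp [shiftedChooseMul]
  | succ j =>
    simp only [shiftedChooseMul]
    push_cast
    linear_combination c * Nat.sub_mul_choose_eq_succ_mul_choose_succ d j

lemma choose_mul_add_shiftedChooseMul_pos {c : ℤ} (hc : 0 < c) {d m : ℕ} (hm : m ≤ d + 1) :
    0 < (d.choose m : ℤ) * c + shiftedChooseMul c d m := by
  cases m with
  | zero => simpa [shiftedChooseMul] using hc
  | succ j =>
    have hj : 0 < (d.choose j : ℤ) := by exact_mod_cast Nat.choose_pos (by omega)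
    simp only [shiftedChooseMul]
    positivity

section Component

variable {M : Type*} [AddCommGroup M]

/-- `r_m`, the functional of the homogeneous component `(1/m!) ad_U^m(V)`. -/
def componentFunctional (ρ₁ ρ₂ : M →+ ℤ) (c : ℤ) (d m : ℕ) : M →+ ℤ :=
  (d.choose m : ℤ) • ρ₂ - shiftedChooseMul c d m • ρ₁

variable {ρ₁ ρ₂ : M →+ ℤ} {e₁ e₂ : M} {d : ℕ}

lemma componentFunctional_apply_pos (h₁ : ρ₁ e₁ = -1) (hc : 1 ≤ ρ₂ e₁) {m : ℕ}
    (hm : m ≤ d + 1) :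
    0 < componentFunctional ρ₁ ρ₂ (ρ₂ e₁) d m e₁ := by
  have h := choose_mul_add_shiftedChooseMul_pos (by omega : 0 < ρ₂ e₁) hm
  simp only [componentFunctional, AddMonoidHom.sub_apply, AddMonoidHom.smul_apply, smul_eq_mul,
    h₁] at h ⊢
  linarith

lemma componentFunctional_succ (h₁ : ρ₁ e₁ = -1) (hd : ρ₁ e₂ = d) (m : ℕ) :
    ρ₁ (e₂ + m • e₁) • componentFunctional ρ₁ ρ₂ (ρ₂ e₁) d m
        - componentFunctional ρ₁ ρ₂ (ρ₂ e₁) d m e₁ • ρ₁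
      = ((m + 1 : ℕ) : ℤ) • componentFunctional ρ₁ ρ₂ (ρ₂ e₁) d (m + 1) := by
  ext x
  simp only [componentFunctional, AddMonoidHom.sub_apply, AddMonoidHom.smul_apply, smul_eq_mul,
    map_add, map_nsmul, hd, h₁]
  push_cast
  linear_combination ρ₂ x * Nat.sub_mul_choose_eq_succ_mul_choose_succ d m
    - ρ₁ x * shiftedChooseMul_succ_recurrence (ρ₂ e₁) d m

lemma iterate_ad_homDer (K : Type*) [Field K] (h₁ : ρ₁ e₁ = -1) (hd : ρ₁ e₂ = d) (m : ℕ) :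
    (fun W => homDer K ρ₁ e₁ ∘ₗ W - W ∘ₗ homDer K ρ₁ e₁)^[m] (homDer K ρ₂ e₂)
      = (m.factorial : ℤ) • homDer K (componentFunctional ρ₁ ρ₂ (ρ₂ e₁) d m) (e₂ + m • e₁) := by
  induction m with
  | zero => simp [componentFunctional, shiftedChooseMul]
  | succ m ih =>
    rw [Function.iterate_succ_apply', ih, LinearMap.comp_smul, LinearMap.smul_comp,
      ← zsmul_sub, homDer_comp_sub_comp, componentFunctional_succ h₁ hd, homDer_zsmul, smul_smul,
      add_assoc, ← succ_nsmul, Nat.factorial_succ, Nat.cast_mul, mul_comm]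

end Component

theorem stmt11_general {K : Type*} [Field K] [CharZero K] {M : Type*} [AddCommGroup M]
    (ρ₁ ρ₂ : M →+ ℤ) (e₁ e₂ : M)
    (h₁ : ρ₁ e₁ = -1)
    (hc : 1 ≤ ρ₂ e₁)
    (d : ℕ) (hd : ρ₁ e₂ = (d : ℤ)) :
    ∃ r : ℕ → (M →+ ℤ), (∀ m : ℕ, m ≤ d + 1 → r m ≠ 0) ∧
      ∑ m ∈ Finset.range (d + 2),
          ((m.factorial : K)⁻¹) •
            ((fun W => homDer K ρ₁ e₁ ∘ₗ W - W ∘ₗ homDer K ρ₁ e₁)^[m] (homDer K ρ₂ e₂))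
        = ∑ m ∈ Finset.range (d + 2), homDer K (r m) (e₂ + m • e₁) := by
  refine ⟨componentFunctional ρ₁ ρ₂ (ρ₂ e₁) d, fun m hm hzero => ?_,
    Finset.sum_congr rfl fun m _ => ?_⟩
  · simpa [hzero] using componentFunctional_apply_pos h₁ hc hm
  · rw [iterate_ad_homDer K h₁ hd, ← Int.cast_smul_eq_zsmul K, smul_smul, Int.cast_natCast,
      inv_mul_cancel₀ (by exact_mod_cast m.factorial_ne_zero), one_smul]

/-- with `U = ∂_{ρ₁,e₁}`, `V = ∂_{ρ₂,e₂}`, `⟨ρ₁,e₁⟩ = ⟨ρ₂,e₂⟩ = −1`,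
`c₂ = ⟨ρ₂,e₁⟩ ≥ 1`, `δ = ⟨ρ₁,e₂⟩ + 1 = d + 1`, the derivation
`∂ = Ad_{exp(U)}(V) = exp(ad_U)(V) = Σ_{m=0}^{δ} (1/m!) ad_U^m(V)` decomposes into
nonzero homogeneous components exactly in the degrees `e₂ + m e₁`, `m = 0, …, δ`;
hence its Newton polytope is the segment `[e₂, e₂ + δ e₁]`. -/
theorem stmt11 {K : Type*} [Field K] [CharZero K] {M : Type*} [AddCommGroup M]
    (ρ₁ ρ₂ : M →+ ℤ) (e₁ e₂ : M)
    (h₁ : ρ₁ e₁ = -1) (h₂ : ρ₂ e₂ = -1)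
    (hc : 1 ≤ ρ₂ e₁)
    (d : ℕ) (hd : ρ₁ e₂ = (d : ℤ)) :
    ∃ r : ℕ → (M →+ ℤ), (∀ m : ℕ, m ≤ d + 1 → r m ≠ 0) ∧
      ∑ m ∈ Finset.range (d + 2),
          ((m.factorial : K)⁻¹) •
            ((fun W => homDer K ρ₁ e₁ ∘ₗ W - W ∘ₗ homDer K ρ₁ e₁)^[m] (homDer K ρ₂ e₂))
        = ∑ m ∈ Finset.range (d + 2), homDer K (r m) (e₂ + m • e₁) :=
  stmt11_general ρ₁ ρ₂ e₁ e₂ h₁ hc d hd
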